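/- arXiv:2304.05061 — 2 statements merged into one kernel-verified Lean document; each statement's English description precedes it below -/
import Mathlib

section
/- Let a(x) ∈ ℚ(x). The equation y' + a(x)·y = 0 has a nonzero rational solution in ℚ̄(x) if and only if a(x) has at most simple poles with integer residues at every point of ℚ̄ and a(x) vanishes at infinity. -/
/-!
The map `f ↦ f' / f` turns products into sums, and `y' + a y = 0` has the nonzero solution `f`
exactly when `f' / f = -a`. Over an algebraically closed field every nonzero rational function is
`C c * ∏ (X - cᵢ) ^ nᵢ` with `nᵢ ∈ ℤ`, so the logarithmic derivatives of nonzero rational functions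
form precisely the additive subgroup generated by the `(X - c)⁻¹`, i.e. the sums `∑ nᵢ / (X - cᵢ)`.
-/

open Polynomial

/-- Formal derivative of a rational function, via the quotient rule on the
canonical numerator/denominator representation. -/
noncomputable def rderiv {F : Type*} [Field F] (f : RatFunc F) : RatFunc F :=
  algebraMap (Polynomial F) (RatFunc F)
      (Polynomial.derivative f.num * f.denom - f.num * Polynomial.derivative f.denom) /
    algebraMap (Polynomial F) (RatFunc F) (f.denom ^ 2)

/-- Base change of a rational function along a field embedding `f : F →+* L`. -/
noncomputable def liftRF {F L : Type*} [Field F] [Field L] (f : F →+* L)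
    (b : RatFunc F) : RatFunc L :=
  algebraMap (Polynomial L) (RatFunc L) (b.num.map f) /
    algebraMap (Polynomial L) (RatFunc L) (b.denom.map f)

open Differential

section rderiv

variable {F : Type*} [Field F]

/-- The quotient rule holds for every representation `p / q`, not only the reduced one. -/
theorem rderiv_div_algebraMap (p q : F[X]) (hq : q ≠ 0) :
    rderiv (algebraMap F[X] (RatFunc F) p / algebraMap F[X] (RatFunc F) q) =
      algebraMap F[X] (RatFunc F) (derivative p * q - p * derivative q) /
        algebraMap F[X] (RatFunc F) (q ^ 2) := by
  set f := algebraMap F[X] (RatFunc F) p / algebraMap F[X] (RatFunc F) q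
  have hcross : f.num * q = p * f.denom := by
    apply RatFunc.algebraMap_injective F
    have h := f.num_div_denom
    rwa [div_eq_div_iff (RatFunc.algebraMap_ne_zero f.denom_ne_zero)
      (RatFunc.algebraMap_ne_zero hq), ← map_mul, ← map_mul] at h
  have hder := congrArg derivative hcross
  simp only [derivative_mul] at hder
  have key : (derivative f.num * f.denom - f.num * derivative f.denom) * q ^ 2 =
      (derivative p * q - p * derivative q) * f.denom ^ 2 := by
    linear_combination (f.denom * q) * hder -
      (derivative f.denom * q + f.denom * derivative q) * hcross
  rw [rderiv, div_eq_div_iff (RatFunc.algebraMap_ne_zero (pow_ne_zero 2 f.denom_ne_zero))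
    (RatFunc.algebraMap_ne_zero (pow_ne_zero 2 hq)), ← map_mul, ← map_mul, key]

theorem rderiv_algebraMap (p : F[X]) :
    rderiv (algebraMap F[X] (RatFunc F) p) = algebraMap F[X] (RatFunc F) (derivative p) := by
  simp [rderiv, RatFunc.num_algebraMap, RatFunc.denom_algebraMap]

theorem rderiv_add (f g : RatFunc F) : rderiv (f + g) = rderiv f + rderiv g := by
  have hf := RatFunc.algebraMap_ne_zero f.denom_ne_zero
  have hg := RatFunc.algebraMap_ne_zero g.denom_ne_zero
  rw [← f.num_div_denom, ← g.num_div_denom, div_add_div _ _ hf hg, ← map_mul, ← map_mul,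
    ← map_mul, ← map_add, rderiv_div_algebraMap _ _ (mul_ne_zero f.denom_ne_zero g.denom_ne_zero),
    rderiv_div_algebraMap _ _ f.denom_ne_zero, rderiv_div_algebraMap _ _ g.denom_ne_zero]
  simp only [derivative_mul, map_sub, map_add, map_mul, map_pow]
  field_simp
  ring

theorem rderiv_mul (f g : RatFunc F) : rderiv (f * g) = rderiv f * g + f * rderiv g := by
  have hf := RatFunc.algebraMap_ne_zero f.denom_ne_zero
  have hg := RatFunc.algebraMap_ne_zero g.denom_ne_zero
  rw [← f.num_div_denom, ← g.num_div_denom, div_mul_div_comm, ← map_mul, ← map_mul,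
    rderiv_div_algebraMap _ _ (mul_ne_zero f.denom_ne_zero g.denom_ne_zero),
    rderiv_div_algebraMap _ _ f.denom_ne_zero, rderiv_div_algebraMap _ _ g.denom_ne_zero]
  simp only [derivative_mul, map_sub, map_add, map_mul, map_pow]
  field_simp
  ring

noncomputable def rderivAddHom : RatFunc F →+ RatFunc F :=
  AddMonoidHom.mk' rderiv rderiv_add

noncomputable instance : Differential (RatFunc F) where
  deriv :=
    -- `Differential` is stated with `Ring.toIntAlgebra`, which is not reducibly defeq to the
    -- `ℤ`-algebra structure that instance search finds on `RatFunc F`.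
    letI : Algebra ℤ (RatFunc F) := Ring.toIntAlgebra _
    Derivation.mk' rderivAddHom.toIntLinearMap fun f g => by
      change rderiv (f * g) = f * rderiv g + g * rderiv f
      rw [rderiv_mul, add_comm, mul_comm g]

theorem RatFunc.deriv_eq_rderiv (f : RatFunc F) : f′ = rderiv f := rfl

end rderiv

theorem Differential.logDeriv_inv {R : Type*} [Field R] [Differential R] (a : R) :
    logDeriv a⁻¹ = -logDeriv a := by
  rcases eq_or_ne a 0 with rfl | ha
  · simp
  · rw [logDeriv, logDeriv, Derivation.leibniz_inv, smul_eq_mul]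
    field_simp

theorem AddSubgroup.mem_closure_range_iff_exists_fin {M ι : Type*} [AddCommGroup M] {v : ι → M}
    {x : M} : x ∈ AddSubgroup.closure (Set.range v) ↔
      ∃ (m : ℕ) (c : Fin m → ι) (n : Fin m → ℤ), Function.Injective c ∧
        x = ∑ i, n i • v (c i) := by
  constructor
  · rw [AddSubgroup.mem_closure_range_iff]
    rintro ⟨a, rfl⟩
    let e := a.support.equivFin.symm
    refine ⟨a.support.card, fun i => e i, fun i => a (e i),
      Subtype.val_injective.comp e.injective, ?_⟩
    rw [Finsupp.sum, ← Finset.sum_coe_sort, ← e.sum_comp]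
  · rintro ⟨m, c, n, -, rfl⟩
    exact AddSubgroup.sum_mem _ fun i _ =>
      AddSubgroup.zsmul_mem _ (AddSubgroup.subset_closure (Set.mem_range_self _)) _

namespace RatFunc

variable {F : Type*} [Field F]

variable (F) in
/-- Over an algebraically closed field these are exactly the rational functions vanishing at
infinity whose poles are simple with integer residues. -/
noncomputable def integerResidueSubgroup : AddSubgroup (RatFunc F) :=
  AddSubgroup.closure (Set.range fun c : F => (X - C c)⁻¹)

theorem X_sub_C_ne_zero (c : F) : (X - C c : RatFunc F) ≠ 0 := by
  rw [← algebraMap_X, ← algebraMap_C, ← map_sub]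
  exact algebraMap_ne_zero (Polynomial.X_sub_C_ne_zero c)

theorem logDeriv_X_sub_C (c : F) : logDeriv (X - C c : RatFunc F) = (X - C c)⁻¹ := by
  rw [Differential.logDeriv, deriv_eq_rderiv, ← algebraMap_X, ← algebraMap_C, ← map_sub,
    rderiv_algebraMap]
  simp [one_div]

theorem logDeriv_C (c : F) : logDeriv (C c : RatFunc F) = 0 := by
  rw [Differential.logDeriv, deriv_eq_rderiv, ← algebraMap_C, rderiv_algebraMap, derivative_C,
    map_zero, zero_div]

theorem exists_logDeriv_eq_of_mem_integerResidueSubgroup {b : RatFunc F}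
    (hb : b ∈ integerResidueSubgroup F) : ∃ f : RatFunc F, f ≠ 0 ∧ logDeriv f = b := by
  induction hb using AddSubgroup.closure_induction with
  | mem _ h =>
    obtain ⟨c, rfl⟩ := h
    exact ⟨X - C c, X_sub_C_ne_zero c, logDeriv_X_sub_C c⟩
  | zero => exact ⟨1, one_ne_zero, Differential.logDeriv_one⟩
  | add _ _ _ _ ihf ihg =>
    obtain ⟨f, hf, rfl⟩ := ihf
    obtain ⟨g, hg, rfl⟩ := ihg
    exact ⟨f * g, mul_ne_zero hf hg, Differential.logDeriv_mul f g hf hg⟩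
  | neg _ _ ihf =>
    obtain ⟨f, hf, rfl⟩ := ihf
    exact ⟨f⁻¹, inv_ne_zero hf, Differential.logDeriv_inv f⟩

variable {K : Type*} [Field K] [IsAlgClosed K]

theorem logDeriv_algebraMap_mem_integerResidueSubgroup (p : K[X]) :
    logDeriv (algebraMap K[X] (RatFunc K) p) ∈ integerResidueSubgroup K := by
  rcases eq_or_ne p 0 with rfl | hp
  · simp
  have hsplit : algebraMap K[X] (RatFunc K) p =
      C p.leadingCoeff * (p.roots.map fun r => X - C r).prod := by
    conv_lhs =>
      rw [← C_leadingCoeff_mul_prod_multiset_X_sub_C (IsAlgClosed.card_roots_eq_natDegree (p := p))]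
    simp [map_multiset_prod, Multiset.map_map, Function.comp_def]
  have hC : (C p.leadingCoeff : RatFunc K) ≠ 0 := by simpa using leadingCoeff_ne_zero.mpr hp
  have hX : ∀ r ∈ p.roots, (X - C r : RatFunc K) ≠ 0 := fun r _ => X_sub_C_ne_zero r
  rw [hsplit, Differential.logDeriv_mul _ _ hC (Multiset.prod_ne_zero (by simpa using hX)),
    logDeriv_C, zero_add, Differential.logDeriv_multisetProd _ hX]
  refine AddSubgroup.multiset_sum_mem _ _ fun x hx => ?_
  obtain ⟨r, -, rfl⟩ := Multiset.mem_map.mp hx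
  exact logDeriv_X_sub_C r ▸ AddSubgroup.subset_closure (Set.mem_range_self r)

theorem logDeriv_mem_integerResidueSubgroup (f : RatFunc K) :
    logDeriv f ∈ integerResidueSubgroup K := by
  rcases eq_or_ne f 0 with rfl | hf
  · simp
  rw [← f.num_div_denom, Differential.logDeriv_div _ _ (algebraMap_ne_zero (num_ne_zero hf))
    (algebraMap_ne_zero f.denom_ne_zero)]
  exact sub_mem (logDeriv_algebraMap_mem_integerResidueSubgroup _)
    (logDeriv_algebraMap_mem_integerResidueSubgroup _)

theorem rderiv_add_mul_eq_zero_iff {f : RatFunc F} (hf : f ≠ 0) (b : RatFunc F) :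
    rderiv f + b * f = 0 ↔ logDeriv f = -b := by
  rw [Differential.logDeriv, deriv_eq_rderiv, div_eq_iff hf, neg_mul, add_eq_zero_iff_eq_neg]

theorem exists_rderiv_add_mul_eq_zero_iff (b : RatFunc K) :
    (∃ f : RatFunc K, f ≠ 0 ∧ rderiv f + b * f = 0) ↔ b ∈ integerResidueSubgroup K := by
  constructor
  · rintro ⟨f, hf, hsol⟩
    have h := logDeriv_mem_integerResidueSubgroup f
    rwa [(rderiv_add_mul_eq_zero_iff hf b).mp hsol, neg_mem_iff] at h
  · intro hb
    obtain ⟨f, hf, hlog⟩ := exists_logDeriv_eq_of_mem_integerResidueSubgroup (neg_mem hb)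
    exact ⟨f, hf, (rderiv_add_mul_eq_zero_iff hf b).mpr hlog⟩

end RatFunc

/-- Let `a(x) ∈ ℚ(x)`.  The equation `y' + a(x)y = 0` has a nonzero rational solution
in `ℚ̄(x)` if and only if `a(x)` has at most simple poles with integer residues at
every point of `ℚ̄` and vanishes at infinity; i.e. iff `a(x) = ∑ᵢ nᵢ/(x − aᵢ)` with
the `aᵢ` distinct points of `ℚ̄` and `nᵢ ∈ ℤ`. -/
theorem order_one_rational_solution_char_zero (a : RatFunc ℚ) :
    (∃ f : RatFunc (AlgebraicClosure ℚ), f ≠ 0 ∧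
        rderiv f + liftRF (algebraMap ℚ (AlgebraicClosure ℚ)) a * f = 0) ↔
      ∃ (m : ℕ) (c : Fin m → AlgebraicClosure ℚ) (n : Fin m → ℤ),
        Function.Injective c ∧
        liftRF (algebraMap ℚ (AlgebraicClosure ℚ)) a =
          ∑ i : Fin m,
            RatFunc.C ((n i : AlgebraicClosure ℚ)) *
              (RatFunc.X - RatFunc.C (c i))⁻¹ := by
  rw [RatFunc.exists_rderiv_add_mul_eq_zero_iff, RatFunc.integerResidueSubgroup,
    AddSubgroup.mem_closure_range_iff_exists_fin]
  simp only [zsmul_eq_mul, map_intCast]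
end

section
/- Let p be a prime, B(x) ∈ M_n(𝔽_p(x)), and Δ(F) = F' + B·F on 𝔽_p(x)^n. The following are equivalent: (1) the 𝔽_p(x^p)-vector space ker Δ has dimension n; (2) Δ^p = 0. -/
/-!
Write `K = 𝔽_p(x)`, `D = d/dx` and `C = ker D`. The minimal polynomial `q` of `x` over `C` has
degree `p`: at most `p` because `x ^ p ∈ C`, and at least `p` because `q'(x) = D (q x) = 0`
forces `q' = 0`, so that `q` is a polynomial in `T ^ p`. Hence `[K : C] = p`, and `D ^ p` kills
the `C`-basis `1, x, …, x ^ (p - 1)`, i.e. `D ^ p = 0`.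

If one solution of `Δ` is a `K`-combination of `K`-independent solutions, applying `Δ` shows
that the coefficients are constants; so solutions independent over `C` are independent over
`K`, `n` of them form a `K`-basis of `K ^ n`, and in that basis `Δ ^ p` acts coordinatewise as
`D ^ p = 0`. Conversely `Δ` is `C`-linear on the `np`-dimensional `C`-space `K ^ n`, and
`dim ker Δ ^ p ≤ p · dim ker Δ`, so `Δ ^ p = 0` forces `dim_C ker Δ ≥ n`.
-/

open Polynomial

open Module

theorem Module.End.finrank_ker_pow_le {K V : Type*} [DivisionRing K] [AddCommGroup V] [Module K V]
    [FiniteDimensional K V] (f : Module.End K V) (k : ℕ) :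
    finrank K (LinearMap.ker (f ^ k)) ≤ k * finrank K (LinearMap.ker f) := by
  induction k with
  | zero => simp [Module.End.one_eq_id]
  | succ k ih =>
    have h := f.lift_rank_comap_le (LinearMap.ker (f ^ k))
    simp only [Cardinal.lift_id] at h
    rw [← LinearMap.ker_comp, ← Module.End.mul_eq_comp,
      ← pow_succ, ← finrank_eq_rank, ← finrank_eq_rank, ← finrank_eq_rank] at h
    norm_cast at h
    rw [add_mul, one_mul]
    omega

namespace Derivation

variable {F K : Type*} [Field F] [Field K] [Algebra F K] (D : Derivation F K K)

def constants : IntermediateField F K where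
  carrier := {a | D a = 0}
  mul_mem' {a b} ha hb := by simp_all [leibniz]
  one_mem' := D.map_one_eq_zero
  add_mem' ha hb := by simp_all
  zero_mem' := D.map_zero
  algebraMap_mem' := D.map_algebraMap
  inv_mem' a ha := by simp_all [leibniz_inv]

@[simp]
theorem mem_constants {a : K} : a ∈ D.constants ↔ D a = 0 := Iff.rfl

def overConstants : Derivation D.constants K K :=
  Derivation.mk'
    { toFun := D
      map_add' := D.map_add
      map_smul' := fun c a => by
        simp [Algebra.smul_def, leibniz, (D.mem_constants.mp c.2)] }
    D.leibniz

@[simp]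
theorem coe_overConstants : ⇑D.overConstants = D := rfl

theorem iterate_pow_eq_zero {x : K} (hx : D x = 1) {i k : ℕ} (hik : i < k) :
    D^[k] (x ^ i) = 0 := by
  obtain ⟨k, rfl⟩ : ∃ k', k = k' + 1 := ⟨k - 1, by omega⟩
  rw [Function.iterate_succ_apply]
  induction i generalizing k with
  | zero => rw [pow_zero, map_one_eq_zero, iterate_map_zero]
  | succ i ih =>
    obtain ⟨k, rfl⟩ : ∃ k', k = k' + 1 := ⟨k - 1, by omega⟩
    rw [leibniz_pow, hx, Nat.add_sub_cancel, smul_eq_mul, mul_one, iterate_map_nsmul,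
      Function.iterate_succ_apply, ih k (by omega), smul_zero]

theorem pow_mem_constants_of_charP (p : ℕ) [CharP K p] (a : K) : a ^ p ∈ D.constants := by
  simp [leibniz_pow]

theorem isIntegral_constants (p : ℕ) [hp : Fact p.Prime] [CharP K p] (a : K) :
    IsIntegral D.constants a :=
  ⟨X ^ p - C ⟨a ^ p, D.pow_mem_constants_of_charP p a⟩, monic_X_pow_sub_C _ hp.out.ne_zero,
    by simp⟩

theorem natDegree_minpoly_constants (p : ℕ) [hp : Fact p.Prime] [CharP K p] {x : K}
    (hx : D x = 1) : (minpoly D.constants x).natDegree = p := by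
  set q := minpoly D.constants x
  set P : D.constants[X] := X ^ p - C ⟨x ^ p, D.pow_mem_constants_of_charP p x⟩
  have hP : P.Monic := monic_X_pow_sub_C _ hp.out.ne_zero
  have hPx : aeval x P = 0 := by simp [P]
  have hint := D.isIntegral_constants p x
  have hle : q.natDegree ≤ p := by
    simpa [P, natDegree_X_pow_sub_C] using natDegree_le_natDegree (minpoly.min _ x hP hPx)
  have hq' : derivative q = 0 := by
    have h := D.overConstants.map_aeval q x
    rw [minpoly.aeval, map_zero, coe_overConstants, hx, smul_eq_mul, mul_one] at h
    exact eq_zero_of_dvd_of_degree_lt (minpoly.dvd _ x h.symm)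
      (degree_derivative_lt (minpoly.ne_zero hint))
  have hexp := congrArg natDegree (expand_contract p hq' hp.out.ne_zero)
  rw [natDegree_expand] at hexp
  have hpos : 0 < q.natDegree := minpoly.natDegree_pos hint
  have hc : (contract p q).natDegree ≠ 0 := by
    intro h
    rw [h, zero_mul] at hexp
    omega
  nlinarith [Nat.one_le_iff_ne_zero.mpr hc]

open IntermediateField in
theorem finrank_constants_of_adjoin_eq_top (p : ℕ) [Fact p.Prime] [CharP K p] {x : K} (hx : D x = 1)
    (hgen : D.constants⟮x⟯ = ⊤) : Module.finrank D.constants K = p := by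
  rw [← IntermediateField.finrank_top', ← hgen,
    IntermediateField.adjoin.finrank (D.isIntegral_constants p x),
    D.natDegree_minpoly_constants p hx]

open IntermediateField in
theorem iterate_eq_zero_of_adjoin_eq_top (p : ℕ) [Fact p.Prime] [CharP K p] {x : K} (hx : D x = 1)
    (hgen : D.constants⟮x⟯ = ⊤) (a : K) : D^[p] a = 0 := by
  have hdim := D.finrank_constants_of_adjoin_eq_top p hx hgen
  have : FiniteDimensional D.constants K :=
    Module.finite_of_finrank_pos (hdim ▸ (Fact.out : p.Prime).pos)
  have hspan := (linearIndependent_pow (K := D.constants) x).span_eq_top_of_card_eq_finrank'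
    (by rw [Fintype.card_fin, hdim, D.natDegree_minpoly_constants p hx])
  have hzero : (D.overConstants : K →ₗ[D.constants] K) ^ p = 0 := by
    refine LinearMap.ext_on_range hspan fun i => ?_
    rw [Module.End.pow_apply, LinearMap.zero_apply]
    exact D.iterate_pow_eq_zero hx (i.2.trans_eq (D.natDegree_minpoly_constants p hx))
  simpa [Module.End.pow_apply] using LinearMap.congr_fun hzero a

section Connection

variable {V : Type*} [AddCommGroup V] [Module K V]

def IsConnection (Δ : V →+ V) : Prop :=
  ∀ (a : K) (v : V), Δ (a • v) = D a • v + a • Δ v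

namespace IsConnection

variable {D} {Δ : V →+ V}

def toLinearMap (hΔ : D.IsConnection Δ) : V →ₗ[D.constants] V where
  toFun := Δ
  map_add' := Δ.map_add
  map_smul' c v := by
    change Δ ((c : K) • v) = (c : K) • Δ v
    rw [hΔ, (D.mem_constants.mp c.2), zero_smul, zero_add]

@[simp]
theorem coe_toLinearMap (hΔ : D.IsConnection Δ) : ⇑hΔ.toLinearMap = Δ := rfl

theorem iterate_smul_of_eq_zero (hΔ : D.IsConnection Δ) {v : V} (hv : Δ v = 0) (k : ℕ)
    (a : K) : Δ^[k] (a • v) = D^[k] a • v := by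
  induction k generalizing a with
  | zero => rfl
  | succ k ih =>
    rw [Function.iterate_succ_apply, Function.iterate_succ_apply, hΔ, hv, smul_zero, add_zero,
      ih]

theorem linearIndependent_of_constants (hΔ : D.IsConnection Δ) {m : ℕ} {v : Fin m → V}
    (hv : ∀ i, Δ (v i) = 0) (hli : LinearIndependent D.constants v) :
    LinearIndependent K v := by
  induction m with
  | zero => exact linearIndependent_empty_type
  | succ m ih =>
    rw [← Fin.cons_self_tail v, linearIndependent_finCons] at hli ⊢
    have hK := ih (fun i => hv i.succ) hli.1
    refine ⟨hK, fun hmem => hli.2 ?_⟩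
    obtain ⟨c, hc⟩ := (Submodule.mem_span_range_iff_exists_fun K).mp hmem
    have hDc : ∀ i, D (c i) = 0 := by
      have h := congrArg Δ hc
      simp only [map_sum, Fin.tail, hΔ _, hv, smul_zero, add_zero] at h
      exact Fintype.linearIndependent_iff.mp hK _ h
    exact (Submodule.mem_span_range_iff_exists_fun _).mpr ⟨fun i => ⟨c i, hDc i⟩, hc⟩

theorem iterate_eq_zero_of_span_eq_top (hΔ : D.IsConnection Δ) {ι : Type*} [Fintype ι]
    {v : ι → V} (hv : ∀ i, Δ (v i) = 0) (hspan : Submodule.span K (Set.range v) = ⊤) {k : ℕ}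
    (hk : ∀ a, D^[k] a = 0) (w : V) : Δ^[k] w = 0 := by
  have hw : w ∈ Submodule.span K (Set.range v) := hspan ▸ Submodule.mem_top
  obtain ⟨c, rfl⟩ := (Submodule.mem_span_range_iff_exists_fun K).mp hw
  rw [← hΔ.coe_toLinearMap, ← Module.End.pow_apply, map_sum]
  refine Finset.sum_eq_zero fun i _ => ?_
  rw [Module.End.pow_apply, coe_toLinearMap, hΔ.iterate_smul_of_eq_zero (hv i), hk, zero_smul]

theorem finrank_le_finrank_ker (hΔ : D.IsConnection Δ) [FiniteDimensional D.constants K]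
    [FiniteDimensional K V] (hΔr : ∀ v, Δ^[finrank D.constants K] v = 0) :
    finrank K V ≤ finrank D.constants (LinearMap.ker hΔ.toLinearMap) := by
  have : FiniteDimensional D.constants V := FiniteDimensional.trans D.constants K V
  have hker : LinearMap.ker (hΔ.toLinearMap ^ finrank D.constants K) = ⊤ :=
    eq_top_iff.mpr fun v _ => by rw [LinearMap.mem_ker, Module.End.pow_apply]; exact hΔr v
  have h := Module.End.finrank_ker_pow_le hΔ.toLinearMap (finrank D.constants K)
  rw [hker, finrank_top, ← Module.finrank_mul_finrank D.constants K V] at h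
  exact Nat.le_of_mul_le_mul_left h Module.finrank_pos

end IsConnection

variable {ι : Type*} [Fintype ι]

theorem linearIndependent_constants_iff {v : ι → V} :
    LinearIndependent D.constants v ↔
      ∀ c : ι → K, (∀ i, D (c i) = 0) → ∑ i, c i • v i = 0 → ∀ i, c i = 0 := by
  rw [Fintype.linearIndependent_iff]
  refine ⟨fun h c hc hsum i => congrArg Subtype.val (h (fun i => ⟨c i, hc i⟩) hsum i),
    fun h g hsum i => Subtype.ext (h (fun i => g i) (fun i => (g i).2) hsum i)⟩

def matrixConnection (B : Matrix ι ι K) : (ι → K) →+ (ι → K) where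
  toFun v := (fun j => D (v j)) + B.mulVec v
  map_zero' := by ext; simp
  map_add' v w := by
    ext
    simp [Matrix.mulVec_add]
    ring

theorem isConnection_matrixConnection (B : Matrix ι ι K) :
    D.IsConnection (D.matrixConnection B) := by
  intro a v
  funext j
  simp [matrixConnection, Matrix.mulVec_smul, leibniz]
  ring

end Connection

end Derivation

namespace RatFunc

variable {F : Type*} [Field F]

local notation "φ" => algebraMap F[X] (RatFunc F)

theorem rderiv_div_algebraMap (a : F[X]) {b : F[X]} (hb : b ≠ 0) :
    rderiv (φ a / φ b) = φ (derivative a * b - a * derivative b) / φ (b ^ 2) := by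
  set f := φ a / φ b
  have hb' : φ b ≠ 0 := algebraMap_ne_zero hb
  have hcross : a * f.denom = f.num * b := by
    apply algebraMap_injective F
    have h : φ f.num / φ f.denom = φ a / φ b := f.num_div_denom
    rw [div_eq_div_iff (algebraMap_ne_zero f.denom_ne_zero) hb'] at h
    simp only [map_mul]
    linear_combination -h
  have hcross' := congrArg derivative hcross
  simp only [derivative_mul] at hcross'
  rw [rderiv, div_eq_div_iff (algebraMap_ne_zero (pow_ne_zero 2 f.denom_ne_zero))
    (algebraMap_ne_zero (pow_ne_zero 2 hb)), ← map_mul, ← map_mul]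
  congr 1
  linear_combination (-(b * f.denom)) * hcross' +
    (b * derivative f.denom + derivative b * f.denom) * hcross

theorem rderiv_algebraMap (a : F[X]) : rderiv (φ a) = φ (derivative a) := by
  simpa using rderiv_div_algebraMap a one_ne_zero

theorem exists_eq_div_algebraMap (f : RatFunc F) : ∃ a b : F[X], b ≠ 0 ∧ f = φ a / φ b :=
  ⟨f.num, f.denom, f.denom_ne_zero, f.num_div_denom.symm⟩

theorem rderiv_add (f g : RatFunc F) : rderiv (f + g) = rderiv f + rderiv g := by
  obtain ⟨a, b, hb, rfl⟩ := exists_eq_div_algebraMap f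
  obtain ⟨c, d, hd, rfl⟩ := exists_eq_div_algebraMap g
  have hb' : φ b ≠ 0 := algebraMap_ne_zero hb
  have hd' : φ d ≠ 0 := algebraMap_ne_zero hd
  have hsum : φ a / φ b + φ c / φ d = φ (a * d + b * c) / φ (b * d) := by
    simp only [map_add, map_mul]; field_simp
  rw [hsum, rderiv_div_algebraMap _ (mul_ne_zero hb hd), rderiv_div_algebraMap a hb,
    rderiv_div_algebraMap c hd]
  simp only [derivative_mul, map_mul, map_sub, map_pow, map_add]
  field_simp
  ring

theorem rderiv_mul (f g : RatFunc F) : rderiv (f * g) = rderiv f * g + f * rderiv g := by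
  obtain ⟨a, b, hb, rfl⟩ := exists_eq_div_algebraMap f
  obtain ⟨c, d, hd, rfl⟩ := exists_eq_div_algebraMap g
  have hb' : φ b ≠ 0 := algebraMap_ne_zero hb
  have hd' : φ d ≠ 0 := algebraMap_ne_zero hd
  rw [div_mul_div_comm, ← map_mul, ← map_mul, rderiv_div_algebraMap _ (mul_ne_zero hb hd),
    rderiv_div_algebraMap a hb, rderiv_div_algebraMap c hd]
  simp only [derivative_mul, map_mul, map_sub, map_pow, map_add]
  field_simp
  ring

noncomputable def derivation : Derivation F (RatFunc F) (RatFunc F) :=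
  Derivation.mk'
    { toFun := rderiv
      map_add' := rderiv_add
      map_smul' := fun c f => by
        rw [Algebra.smul_def, rderiv_mul, IsScalarTower.algebraMap_apply F F[X] (RatFunc F),
          rderiv_algebraMap, Polynomial.algebraMap_eq, derivative_C, map_zero, zero_mul,
          zero_add, ← Polynomial.algebraMap_eq, ← IsScalarTower.algebraMap_apply,
          RingHom.id_apply, Algebra.smul_def] }
    fun f g => by simp only [LinearMap.coe_mk, AddHom.coe_mk, rderiv_mul, smul_eq_mul]; ring

@[simp]
theorem derivation_apply (f : RatFunc F) : derivation f = rderiv f := rfl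

theorem derivation_X : derivation (X : RatFunc F) = 1 := by
  rw [derivation_apply, ← algebraMap_X, rderiv_algebraMap, derivative_X, map_one]

end RatFunc

set_option synthInstance.maxHeartbeats 1000000 in
/-- **Cartier's lemma**: let `p` be a prime, `B(x) ∈ Mₙ(𝔽_p(x))`, and
`Δ : F ↦ F' + B·F` on `𝔽_p(x)ⁿ`.  The space of rational solutions `ker Δ`, which is a
vector space over the field of constants `𝔽_p(xᵖ) = {f : f' = 0}` of dimension at most
`n`, has dimension exactly `n` (i.e. there are `n` solutions linearly independent over
the constants) if and only if the `p`-curvature `Δ^p` vanishes. -/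
theorem cartier_lemma (p : ℕ) [Fact p.Prime] (n : ℕ)
    (B : Matrix (Fin n) (Fin n) (RatFunc (ZMod p))) :
    (∃ F : Fin n → (Fin n → RatFunc (ZMod p)),
        (∀ i, (fun j => rderiv (F i j)) + B.mulVec (F i) = 0) ∧
        ∀ c : Fin n → RatFunc (ZMod p), (∀ i, rderiv (c i) = 0) →
          ∑ i, c i • F i = 0 → ∀ i, c i = 0) ↔
      ∀ G : Fin n → RatFunc (ZMod p),
        (fun H : Fin n → RatFunc (ZMod p) =>
          (fun j => rderiv (H j)) + B.mulVec H)^[p] G = 0 := by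
  set D := RatFunc.derivation (F := ZMod p)
  have hΔ := D.isConnection_matrixConnection B
  have hr : finrank D.constants (RatFunc (ZMod p)) = p :=
    D.finrank_constants_of_adjoin_eq_top p RatFunc.derivation_X (RatFunc.IntermediateField.adjoin_X _)
  have : FiniteDimensional D.constants (RatFunc (ZMod p)) :=
    Module.finite_of_finrank_pos (by rw [hr]; exact (Fact.out : p.Prime).pos)
  change (∃ F : Fin n → Fin n → RatFunc (ZMod p), (∀ i, D.matrixConnection B (F i) = 0) ∧
      ∀ c : Fin n → RatFunc (ZMod p), (∀ i, D (c i) = 0) → ∑ i, c i • F i = 0 → ∀ i, c i = 0) ↔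
    ∀ G, (D.matrixConnection B)^[p] G = 0
  simp only [← Derivation.linearIndependent_constants_iff]
  constructor
  · rintro ⟨F, hF, hC⟩
    have hK := hΔ.linearIndependent_of_constants hF hC
    exact hΔ.iterate_eq_zero_of_span_eq_top hF (hK.span_eq_top_of_card_eq_finrank' (by simp))
      (D.iterate_eq_zero_of_adjoin_eq_top p RatFunc.derivation_X (RatFunc.IntermediateField.adjoin_X _))
  · intro hΔp
    have hn := hΔ.finrank_le_finrank_ker (by rwa [hr])
    rw [Module.finrank_fin_fun] at hn
    obtain ⟨F, hF⟩ := exists_linearIndependent_of_le_finrank hn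
    exact ⟨fun i => F i, fun i => (F i).2, hF.map' _ (Submodule.ker_subtype _)⟩
end
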